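/- arXiv:1104.2524 — 2 statements merged into one kernel-verified Lean document; each statement's English description precedes it below -/
import Mathlib

section
/- For every chordal graph G and every tree model (T, {T_u}) of G, there exists a minimal tree model (T', {T'_u}) of G (one whose host tree has the fewest nodes among all tree models of G) such that |L(T')| ≤ |L(T)| and |L(T'_u)| ≤ |L(T_u)| for every vertex u of G. -/
open SimpleGraph

/-- The degree of a vertex in a graph, via `Set.ncard`. -/
noncomputable def deg {W : Type*} (T : SimpleGraph W) (w : W) : ℕ :=
  (T.neighborSet w).ncard

/-- The set of leaves (degree-one vertices) of a graph. -/
def leaves {W : Type*} (T : SimpleGraph W) : Set W :=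
  {w | deg T w = 1}

/-- The number of leaves. -/
noncomputable def numLeaves {W : Type*} (T : SimpleGraph W) : ℕ :=
  (leaves T).ncard

/-- The set of leaves of the subgraph of `T` induced by `s`
(nodes of `s` with exactly one neighbour inside `s`). -/
def subLeaves {W : Type*} (T : SimpleGraph W) (s : Set W) : Set W :=
  {w | w ∈ s ∧ (T.neighborSet w ∩ s).ncard = 1}

/-- The number of leaves of the subtree induced by `s`. -/
noncomputable def numSubLeaves {W : Type*} (T : SimpleGraph W) (s : Set W) : ℕ :=
  (subLeaves T s).ncard

/-- A tree model of a graph `G`: a finite host tree `T` together with nonempty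
subtrees `sub u` such that distinct vertices are adjacent in `G` iff their
subtrees intersect. -/
structure TreeModel {V : Type*} (G : SimpleGraph V) where
  W : Type
  finW : Finite W
  T : SimpleGraph W
  tree : T.IsTree
  sub : V → Set W
  sub_nonempty : ∀ u, (sub u).Nonempty
  sub_conn : ∀ u, (T.induce (sub u)).Connected
  adj_iff : ∀ u v, u ≠ v → (G.Adj u v ↔ (sub u ∩ sub v).Nonempty)

/-- The leafage of a chordal graph: the minimum number of host-tree leaves over
all tree models. -/
noncomputable def leafage {V : Type*} (G : SimpleGraph V) : ℕ :=
  sInf {n | ∃ M : TreeModel G, numLeaves M.T = n}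

/-- The vertex leafage of a chordal graph: the least `k` such that `G` has a tree
model all of whose subtrees have at most `k` leaves. -/
noncomputable def vleafage {V : Type*} (G : SimpleGraph V) : ℕ :=
  sInf {k | ∃ M : TreeModel G, ∀ u, numSubLeaves M.T (M.sub u) ≤ k}

/-- A maximal clique of `G`. -/
def IsMaxClique {V : Type*} (G : SimpleGraph V) (C : Set V) : Prop :=
  G.IsClique C ∧ ∀ D, G.IsClique D → C ⊆ D → D = C

/-- The type of maximal cliques of `G`. -/
abbrev MaxCliques {V : Type*} (G : SimpleGraph V) := {C : Set V // IsMaxClique G C}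

/-- A clique tree of `G`: a tree whose nodes are exactly the maximal cliques of `G`,
such that every node on the path between nodes `C` and `C'` contains `C ∩ C'`. -/
structure CliqueTree {V : Type*} (G : SimpleGraph V) where
  T : SimpleGraph (MaxCliques G)
  tree : T.IsTree
  path_cond : ∀ (C C' : MaxCliques G) (p : T.Walk C C'), p.IsPath →
    ∀ C'' ∈ p.support, C.1 ∩ C'.1 ⊆ C''.1

/-- The subtree (node set) assigned to a vertex `u` in the tree model defined by a
clique tree of `G`: the set of maximal cliques containing `u`. -/
def cliqueSub {V : Type*} (G : SimpleGraph V) (u : V) : Set (MaxCliques G) :=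
  {C | u ∈ C.1}

/-- The set of nodes of degree at least 3. -/
def Hh {W : Type*} (T : SimpleGraph W) : Set W := {w | 3 ≤ deg T w}

/-- The set of edges incident to a node of degree at least 3. -/
def Ee {W : Type*} (T : SimpleGraph W) : Set (Sym2 W) :=
  {e | e ∈ T.edgeSet ∧ ∃ w ∈ e, w ∈ Hh T}

/-!
Call `bag w` the set of vertices whose subtrees contain the node `w`. If some tree edge `xy`
has `bag x ⊆ bag y`, contracting it into `y` gives a tree model of `G` with one node fewer, and
neither the host tree nor any subtree gains a leaf: away from `y` neighbourhoods are unchanged,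
and the merged node is a leaf of a subtree only if `x` or `y` was one. Repeating this ends in a
model with no such edge, in which every node `w` is the only node whose bag contains `bag w`.
Such a model is minimal: by the Helly property of subtrees of a tree, the clique `bag w` is
realised at some node `φ w` of any other model, and if `φ w = φ w'` then `bag w ∪ bag w'` is a
clique, hence realised at one node `z` of the first model, which forces `w = z = w'`.
-/

namespace SimpleGraph

section Map

variable {V V' : Type*} {G : SimpleGraph V} (f : V → V')

lemma Reachable.to_map {u v : V} (h : G.Reachable u v) : (G.map f).Reachable (f u) (f v) := by
  obtain ⟨p⟩ := h
  induction p with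
  | nil => rfl
  | @cons a b _ hab _ ih =>
    by_cases hf : f a = f b
    · rwa [hf]
    · exact (map_adj_apply' hab hf).reachable.trans ih

lemma Connected.map_of_surjective (hf : Function.Surjective f) (hG : G.Connected) :
    (G.map f).Connected :=
  have := hG.nonempty.map f
  Connected.mk <| hf.forall₂.2 fun u v => (hG u v).to_map f

lemma Connected.induce_image_map {s : Set V} (hs : (G.induce s).Connected) :
    ((G.map f).induce (f '' s)).Connected := by
  refine (hs.map_of_surjective _ (Set.imageFactorization_surjective (f := f) (s := s))).mono ?_
  rintro _ _ ⟨hne, u, v, huv, rfl, rfl⟩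
  exact ⟨fun h => hne (Subtype.ext h), u, v, huv, rfl, rfl⟩

lemma isBridge_of_forall_adj_mem_notMem {S : Set V} {u v : V} (hu : u ∈ S) (hv : v ∉ S)
    (hS : ∀ a b, G.Adj a b → a ∈ S → b ∉ S → s(a, b) = s(u, v)) : G.IsBridge s(u, v) := by
  rw [isBridge_iff_forall_walk_mem_edges]
  intro p
  obtain ⟨d, hd, hdS, hdS'⟩ := p.exists_boundary_dart S hu hv
  exact hS _ _ d.adj hdS hdS' ▸ List.mem_map_of_mem hd

lemma IsAcyclic.map (hG : G.IsAcyclic) (hf : ∀ a b, f a = f b → a = b ∨ G.Adj a b) :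
    (G.map f).IsAcyclic := by
  rw [isAcyclic_iff_forall_adj_isBridge]
  rintro _ _ ⟨hne, u, v, huv, rfl, rfl⟩
  set H := G.deleteEdges {s(u, v)}
  have hside : ∀ a b, f a = f b → (H.Reachable u a ↔ H.Reachable u b) := by
    intro a b hab
    rcases hf a b hab with rfl | hadj
    · rfl
    have : H.Adj a b := by
      refine (deleteEdges_adj ..).2 ⟨hadj, fun he => hne ?_⟩
      rcases Sym2.eq_iff.1 he with ⟨rfl, rfl⟩ | ⟨rfl, rfl⟩
      exacts [hab, hab.symm]
    exact ⟨fun h => h.trans this.reachable, fun h => h.trans this.symm.reachable⟩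
  have hv : ¬ H.Reachable u v := isBridge_iff.1 (isAcyclic_iff_forall_adj_isBridge.1 hG huv)
  -- the side of `u` in `H` is a union of fibres of `f`, so its image is cut off from `f v`
  -- by the single edge `s(f u, f v)`
  refine isBridge_of_forall_adj_mem_notMem (S := f '' {a | H.Reachable u a})
    ⟨u, .rfl, rfl⟩ (fun ⟨a, ha, hav⟩ => hv ((hside a v hav).1 ha)) ?_
  rintro _ _ ⟨-, a, b, hab, rfl, rfl⟩ ⟨a', ha', haa'⟩ hb
  have ha : H.Reachable u a := (hside a' a haa').1 ha'
  have hb : ¬ H.Reachable u b := fun h => hb ⟨b, h, rfl⟩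
  have : s(a, b) = s(u, v) := by
    by_contra he
    exact hb (ha.trans ((deleteEdges_adj ..).2 ⟨hab, by simpa using he⟩).reachable)
  rw [← Sym2.map_mk, this, Sym2.map_mk]

end Map

variable {W : Type*} {T : SimpleGraph W}

lemma IsAcyclic.eq_of_isPath (hT : T.IsAcyclic) {u v : W} {p q : T.Walk u v} (hp : p.IsPath)
    (hq : q.IsPath) : p = q :=
  congrArg Subtype.val ((hT.subsingleton_path u v).elim ⟨p, hp⟩ ⟨q, hq⟩)

lemma IsAcyclic.not_adj_of_adj_of_adj (hT : T.IsAcyclic) {a b c : W} (hab : T.Adj a b)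
    (hbc : T.Adj b c) : ¬ T.Adj a c :=
  by classical
  exact fun hac => hT.cliqueFree le_rfl {a, b, c} (is3Clique_triple_iff.2 ⟨hab, hac, hbc⟩)

def IsPathConvex (T : SimpleGraph W) (s : Set W) : Prop :=
  ∀ ⦃u v : W⦄ (p : T.Walk u v), p.IsPath → u ∈ s → v ∈ s → ∀ w ∈ p.support, w ∈ s

lemma IsPathConvex.inter {s t : Set W} (hs : IsPathConvex T s) (ht : IsPathConvex T t) :
    IsPathConvex T (s ∩ t) :=
  fun _ _ p hp hu hv w hw => ⟨hs p hp hu.1 hv.1 w hw, ht p hp hu.2 hv.2 w hw⟩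

lemma IsPathConvex.mem_of_adj_of_adj {s : Set W} (hs : IsPathConvex T s) {a b c : W}
    (hab : T.Adj a b) (hbc : T.Adj b c) (hac : a ≠ c) (ha : a ∈ s) (hc : c ∈ s) : b ∈ s :=
  hs (.cons hab (.cons hbc .nil)) (by simp [hab.ne, hbc.ne, hac]) ha hc b (by simp)

lemma IsAcyclic.isPathConvex_of_connected_induce (hT : T.IsAcyclic) {s : Set W}
    (hs : (T.induce s).Connected) : IsPathConvex T s := by
  intro u v p hp hu hv w hw
  obtain ⟨q, hq⟩ := (hs ⟨u, hu⟩ ⟨v, hv⟩).exists_isPath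
  have hq' : (q.map (Embedding.induce s).toHom).IsPath :=
    hq.map (Embedding.induce (G := T) s).injective
  rw [hT.eq_of_isPath hp hq'] at hw
  obtain ⟨w', -, rfl⟩ := List.mem_map.1 (q.support_map (Embedding.induce (G := T) s).toHom ▸ hw)
  exact w'.2

lemma IsAcyclic.exists_median (hT : T.IsAcyclic) {a b c : W} (p : T.Walk a b) (hp : p.IsPath)
    (q : T.Walk a c) (hq : q.IsPath) (r : T.Walk b c) (hr : r.IsPath) :
    ∃ m, m ∈ p.support ∧ m ∈ q.support ∧ m ∈ r.support := by
  classical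
  induction p with
  | nil =>
    obtain rfl := hT.eq_of_isPath hq hr
    exact ⟨_, Walk.start_mem_support _, q.start_mem_support, q.start_mem_support⟩
  | @cons a a' b h p' ih =>
    by_cases har : a ∈ r.support
    · exact ⟨a, Walk.start_mem_support _, q.start_mem_support, har⟩
    set q' := (Walk.cons h.symm q).bypass
    have hq' : q'.IsPath := Walk.bypass_isPath _
    obtain ⟨m, hmp, hmq', hmr⟩ := ih hp.of_cons q' hq' r hr
    refine ⟨m, List.mem_cons_of_mem _ hmp, ?_, hmr⟩
    rcases List.mem_cons.1 (Walk.support_bypass_subset_support _ hmq') with rfl | hmq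
    · -- `q'` is the tail of `r` from `m = a'`, which avoids `a`, so `q = a :: q'` passes `m`
      by_cases haq' : a ∈ q'.support
      · have : q' = r.dropUntil m hmr := hT.eq_of_isPath hq' (hr.dropUntil hmr)
        exact absurd (r.support_dropUntil_subset_support hmr (this ▸ haq')) har
      · have : q = Walk.cons h q' := hT.eq_of_isPath hq (hq'.cons haq')
        simp [this]
    · exact hmq

lemma IsTree.inter_inter_nonempty (hT : T.IsTree) {s t r : Set W} (hs : IsPathConvex T s)
    (ht : IsPathConvex T t) (hr : IsPathConvex T r) (hst : (s ∩ t).Nonempty)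
    (hsr : (s ∩ r).Nonempty) (htr : (t ∩ r).Nonempty) : (s ∩ t ∩ r).Nonempty := by
  obtain ⟨a, has, hat⟩ := hst
  obtain ⟨b, hbs, hbr⟩ := hsr
  obtain ⟨c, hct, hcr⟩ := htr
  obtain ⟨p, hp⟩ := (hT.connected a b).exists_isPath
  obtain ⟨q, hq⟩ := (hT.connected a c).exists_isPath
  obtain ⟨r', hr'⟩ := (hT.connected b c).exists_isPath
  obtain ⟨m, hmp, hmq, hmr⟩ := hT.isAcyclic.exists_median p hp q hq r' hr'
  exact ⟨m, ⟨hs p hp has hbs m hmp, ht q hq hat hct m hmq⟩, hr r' hr' hbr hcr m hmr⟩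

lemma IsTree.exists_forall_mem_of_pairwise_inter_nonempty {ι : Type*} (hT : T.IsTree)
    (I : Finset ι) (S : ι → Set W) (hS : ∀ i ∈ I, IsPathConvex T (S i))
    (hI : ∀ i ∈ I, ∀ j ∈ I, (S i ∩ S j).Nonempty) : ∃ z, ∀ i ∈ I, z ∈ S i := by
  classical
  induction I using Finset.induction_on generalizing S with
  | empty => exact ⟨hT.connected.nonempty.some, by simp⟩
  | @insert i I _ ih =>
    simp only [Finset.mem_insert, forall_eq_or_imp] at hS hI ⊢
    obtain rfl | hIne := I.eq_empty_or_nonempty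
    · obtain ⟨z, hz, -⟩ := hI.1.1
      exact ⟨z, hz, by simp⟩
    obtain ⟨z, hz⟩ := ih (fun j => S i ∩ S j) (fun j hj => hS.1.inter (hS.2 j hj))
      (fun j hj k hk => by
        obtain ⟨w, ⟨⟨hwi, hwj⟩, hwk⟩⟩ := hT.inter_inter_nonempty hS.1 (hS.2 j hj) (hS.2 k hk)
          (hI.1.2 j hj) (hI.1.2 k hk) (hI.2 j hj |>.2 k hk)
        exact ⟨w, ⟨hwi, hwj⟩, hwi, hwk⟩)
    obtain ⟨j, hj⟩ := hIne
    exact ⟨z, (hz j hj).1, fun k hk => (hz k hk).2⟩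

section Contraction

variable {x y : W}

/-- The contraction of an edge `xy` of `T` into `y` is `T.map (collapse _)`. -/
noncomputable def collapse (hyx : y ≠ x) (w : W) : {w : W // w ≠ x} :=
  open Classical in if h : w = x then ⟨y, hyx⟩ else ⟨w, h⟩

lemma collapse_eq_iff (hyx : y ≠ x) {w : W} {a : {w : W // w ≠ x}} :
    collapse hyx w = a ↔ w = a.1 ∨ (w = x ∧ a.1 = y) := by
  unfold collapse
  split_ifs with h
  · subst h
    simp [Subtype.ext_iff, eq_comm, a.2.symm]
  · simp [Subtype.ext_iff, h]

lemma collapse_surjective (hyx : y ≠ x) : Function.Surjective (collapse hyx) :=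
  fun a => ⟨a.1, (collapse_eq_iff hyx).2 (.inl rfl)⟩

lemma eq_or_adj_of_collapse_eq (hxy : T.Adj x y) {u w : W}
    (h : collapse hxy.ne' u = collapse hxy.ne' w) : u = w ∨ T.Adj u w := by
  have hu := (collapse_eq_iff hxy.ne').1 h
  have hw := (collapse_eq_iff hxy.ne' (w := w)).1 rfl
  grind [Adj.symm]

lemma map_collapse_adj (hyx : y ≠ x) {a b : {w : W // w ≠ x}} :
    (T.map (collapse hyx)).Adj a b ↔
      a ≠ b ∧ (T.Adj a b ∨ (a.1 = y ∧ T.Adj x b) ∨ (b.1 = y ∧ T.Adj a x)) := by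
  simp only [map_adj', collapse_eq_iff]
  grind [Adj.symm, Adj.ne]

lemma IsTree.map_collapse (hT : T.IsTree) (hxy : T.Adj x y) :
    (T.map (collapse hxy.ne')).IsTree :=
  ⟨hT.connected.map_of_surjective _ (collapse_surjective _),
    hT.isAcyclic.map _ fun _ _ => eq_or_adj_of_collapse_eq hxy⟩

lemma image_collapse (hyx : y ≠ x) {s : Set W} (hxs : x ∈ s → y ∈ s) :
    collapse hyx '' s = Subtype.val ⁻¹' s := by
  ext a
  simp only [Set.mem_image, collapse_eq_iff, Set.mem_preimage]
  grind

lemma ncard_neighborSet_map_collapse_inter (hT : T.IsAcyclic) (hxy : T.Adj x y) {s : Set W}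
    (hs : IsPathConvex T s) (hxs : x ∈ s → y ∈ s) {a : {w : W // w ≠ x}} (hay : a.1 ≠ y)
    (has : a.1 ∈ s) :
    ((T.map (collapse hxy.ne')).neighborSet a ∩ Subtype.val ⁻¹' s).ncard =
      (T.neighborSet a ∩ s).ncard := by
  have hx : T.Adj a x → y ∈ s → x ∈ s := fun hax hys => hs.mem_of_adj_of_adj hax hxy hay has hys
  have : (T.map (collapse hxy.ne')).neighborSet a ∩ Subtype.val ⁻¹' s =
      collapse hxy.ne' '' (T.neighborSet a ∩ s) := by
    ext b
    simp only [Set.mem_inter_iff, mem_neighborSet, map_collapse_adj, Set.mem_preimage,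
      Set.mem_image, collapse_eq_iff]
    grind [Adj.ne]
  rw [this, Set.InjOn.ncard_image]
  intro u hu w hw huw
  exact (eq_or_adj_of_collapse_eq hxy huw).resolve_right
    (hT.not_adj_of_adj_of_adj hu.1.symm hw.1)

lemma image_val_neighborSet_map_collapse_inter (hxy : T.Adj x y) (s : Set W) :
    Subtype.val '' ((T.map (collapse hxy.ne')).neighborSet ⟨y, hxy.ne'⟩ ∩ Subtype.val ⁻¹' s) =
      (T.neighborSet x ∩ s) \ {y} ∪ (T.neighborSet y ∩ s) \ {x} := by
  ext b
  simp only [Set.mem_image, Set.mem_inter_iff, mem_neighborSet, map_collapse_adj,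
    Set.mem_preimage, Subtype.exists, Set.mem_union, Set.mem_sdiff, Set.mem_singleton_iff]
  grind [Adj.ne]

lemma mem_subLeaves_of_mem_subLeaves_map_collapse (hT : T.IsAcyclic) (hxy : T.Adj x y)
    {s : Set W} (hs : IsPathConvex T s) (hxs : x ∈ s → y ∈ s) {a : {w : W // w ≠ x}}
    (ha : a ∈ subLeaves (T.map (collapse hxy.ne')) (Subtype.val ⁻¹' s)) (hay : a.1 ≠ y) :
    a.1 ∈ subLeaves T s :=
  ⟨ha.1, ncard_neighborSet_map_collapse_inter hT hxy hs hxs hay ha.1 ▸ ha.2⟩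

lemma mem_subLeaves_or_mem_subLeaves_of_mem_subLeaves_map_collapse [Finite W] (hT : T.IsAcyclic)
    (hxy : T.Adj x y) {s : Set W} (hs : IsPathConvex T s)
    (hy : ⟨y, hxy.ne'⟩ ∈ subLeaves (T.map (collapse hxy.ne')) (Subtype.val ⁻¹' s)) :
    x ∈ subLeaves T s ∨ y ∈ subLeaves T s := by
  obtain ⟨hys, hdeg⟩ := hy
  rw [← Set.ncard_image_of_injective _ Subtype.val_injective,
    image_val_neighborSet_map_collapse_inter hxy] at hdeg
  by_cases hxs : x ∈ s
  · have hdisj : Disjoint ((T.neighborSet x ∩ s) \ {y}) ((T.neighborSet y ∩ s) \ {x}) :=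
      Set.disjoint_left.2 fun z hzx hzy =>
        hT.not_adj_of_adj_of_adj hzx.1.1 hzy.1.1.symm hxy
    have hyx : y ∈ T.neighborSet x ∩ s := ⟨hxy, hys⟩
    have hxy' : x ∈ T.neighborSet y ∩ s := ⟨hxy.symm, hxs⟩
    rw [Set.ncard_union_eq hdisj, Set.ncard_sdiff_singleton_of_mem hyx,
      Set.ncard_sdiff_singleton_of_mem hxy'] at hdeg
    have hx : 0 < (T.neighborSet x ∩ s).ncard := (Set.ncard_pos).2 ⟨y, hyx⟩
    have hy : 0 < (T.neighborSet y ∩ s).ncard := (Set.ncard_pos).2 ⟨x, hxy'⟩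
    by_cases hx1 : (T.neighborSet x ∩ s).ncard = 1
    · exact .inl ⟨hxs, hx1⟩
    · exact .inr ⟨hys, by omega⟩
  · have hx : (T.neighborSet x ∩ s) \ {y} = ∅ :=
      Set.eq_empty_of_forall_notMem fun z hz =>
        hxs (hs.mem_of_adj_of_adj hz.1.1.symm hxy hz.2 hz.1.2 hys)
    have hy : (T.neighborSet y ∩ s) \ {x} = T.neighborSet y ∩ s :=
      Set.sdiff_singleton_eq_self fun h => hxs h.2
    rw [hx, hy, Set.empty_union] at hdeg
    exact .inr ⟨hys, hdeg⟩

lemma numSubLeaves_map_collapse_le [Finite W] (hT : T.IsAcyclic) (hxy : T.Adj x y) {s : Set W}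
    (hs : IsPathConvex T s) (hxs : x ∈ s → y ∈ s) :
    numSubLeaves (T.map (collapse hxy.ne')) (Subtype.val ⁻¹' s) ≤ numSubLeaves T s := by
  set L := subLeaves T s
  set L' := subLeaves (T.map (collapse hxy.ne')) (Subtype.val ⁻¹' s)
  have hL' : ∀ a ∈ L', a.1 ≠ y → a.1 ∈ L := fun a ha hay =>
    mem_subLeaves_of_mem_subLeaves_map_collapse hT hxy hs hxs ha hay
  rw [numSubLeaves, numSubLeaves, ← Set.ncard_image_of_injective _ Subtype.val_injective]
  have hy : ∀ a ∈ L', a.1 = y → x ∈ L ∨ y ∈ L := fun a ha hay => by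
    obtain rfl : a = ⟨y, hxy.ne'⟩ := Subtype.ext hay
    exact mem_subLeaves_or_mem_subLeaves_of_mem_subLeaves_map_collapse hT hxy hs ha
  by_cases hxL : x ∈ L ∧ y ∉ L
  · calc (Subtype.val '' L').ncard ≤ (insert y (L \ {x})).ncard := by
          refine Set.ncard_le_ncard ?_
          rintro _ ⟨a, ha, rfl⟩
          by_cases hay : a.1 = y
          · exact .inl hay
          · exact .inr ⟨hL' a ha hay, a.2⟩
      _ ≤ (L \ {x}).ncard + 1 := Set.ncard_insert_le _ _
      _ = L.ncard := Set.ncard_sdiff_singleton_add_one hxL.1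
  · refine Set.ncard_le_ncard ?_
    rintro _ ⟨a, ha, rfl⟩
    by_cases hay : a.1 = y
    · rw [hay]
      by_contra hyL
      exact hxL ⟨(hy a ha hay).resolve_right hyL, hyL⟩
    · exact hL' a ha hay

lemma leaves_eq_subLeaves_univ : leaves T = subLeaves T Set.univ := by
  ext w
  simp [leaves, subLeaves, deg]

lemma numLeaves_map_collapse_le [Finite W] (hT : T.IsAcyclic) (hxy : T.Adj x y) :
    numLeaves (T.map (collapse hxy.ne')) ≤ numLeaves T := by
  simpa [numLeaves, numSubLeaves, leaves_eq_subLeaves_univ] using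
    numSubLeaves_map_collapse_le hT hxy (s := Set.univ) (fun _ _ _ _ _ _ _ _ => trivial) id

end Contraction

end SimpleGraph

namespace TreeModel

variable {V : Type*} {G : SimpleGraph V}

def bag (M : TreeModel G) (w : M.W) : Set V := {u | w ∈ M.sub u}

noncomputable def contract (M : TreeModel G) {x y : M.W} (hxy : M.T.Adj x y)
    (hbag : M.bag x ⊆ M.bag y) : TreeModel G where
  W := {w : M.W // w ≠ x}
  finW := have := M.finW; inferInstance
  T := M.T.map (collapse hxy.ne')
  tree := M.tree.map_collapse hxy
  sub u := Subtype.val ⁻¹' M.sub u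
  sub_nonempty u := image_collapse hxy.ne' (hbag ·) ▸ (M.sub_nonempty u).image _
  sub_conn u := image_collapse hxy.ne' (hbag ·) ▸ (M.sub_conn u).induce_image_map _
  adj_iff u v huv := by
    rw [M.adj_iff u v huv]
    refine ⟨fun ⟨w, hwu, hwv⟩ => ⟨collapse hxy.ne' w, ?_, ?_⟩, fun ⟨a, ha⟩ => ⟨a.1, ha⟩⟩
    · exact image_collapse hxy.ne' (hbag ·) ▸ Set.mem_image_of_mem _ hwu
    · exact image_collapse hxy.ne' (hbag ·) ▸ Set.mem_image_of_mem _ hwv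

variable (M : TreeModel G) {x y : M.W} (hxy : M.T.Adj x y) (hbag : M.bag x ⊆ M.bag y)

lemma card_contract_lt : Nat.card (M.contract hxy hbag).W < Nat.card M.W :=
  have := M.finW
  Finite.card_subtype_lt (p := (· ≠ x)) (not_not.2 rfl)

lemma numLeaves_contract_le : numLeaves (M.contract hxy hbag).T ≤ numLeaves M.T :=
  have := M.finW
  numLeaves_map_collapse_le M.tree.isAcyclic hxy

lemma numSubLeaves_contract_le (u : V) :
    numSubLeaves (M.contract hxy hbag).T ((M.contract hxy hbag).sub u) ≤
      numSubLeaves M.T (M.sub u) :=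
  have := M.finW
  numSubLeaves_map_collapse_le M.tree.isAcyclic hxy
    (M.tree.isAcyclic.isPathConvex_of_connected_induce (M.sub_conn u)) (hbag ·)

lemma isClique_of_forall_mem_sub {K : Set V} (z : M.W) (hz : ∀ u ∈ K, z ∈ M.sub u) :
    G.IsClique K :=
  fun u hu v hv huv => (M.adj_iff u v huv).2 ⟨z, hz u hu, hz v hv⟩

lemma exists_forall_mem_sub_of_isClique {K : Set V} (hK : G.IsClique K) :
    ∃ z, ∀ u ∈ K, z ∈ M.sub u := by
  classical
  have := M.finW
  have hconv : ∀ s ∈ (M.sub '' K).toFinite.toFinset, IsPathConvex M.T s := by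
    simp only [Set.Finite.mem_toFinset, Set.forall_mem_image]
    exact fun u _ => M.tree.isAcyclic.isPathConvex_of_connected_induce (M.sub_conn u)
  have hpair : ∀ s ∈ (M.sub '' K).toFinite.toFinset, ∀ t ∈ (M.sub '' K).toFinite.toFinset,
      (s ∩ t).Nonempty := by
    simp only [Set.Finite.mem_toFinset, Set.forall_mem_image]
    intro u hu v hv
    obtain rfl | huv := eq_or_ne u v
    · simpa using M.sub_nonempty u
    · exact (M.adj_iff u v huv).1 (hK hu hv huv)
  obtain ⟨z, hz⟩ := M.tree.exists_forall_mem_of_pairwise_inter_nonempty _ id hconv hpair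
  exact ⟨z, fun u hu => hz _ (by simpa using ⟨u, hu, rfl⟩)⟩

def IsReduced (M : TreeModel G) : Prop :=
  ∀ x y, M.T.Adj x y → ¬ M.bag x ⊆ M.bag y

variable {M} in
lemma IsReduced.eq_of_bag_subset (hM : M.IsReduced) {w z : M.W} (h : M.bag w ⊆ M.bag z) :
    z = w := by
  by_contra hzw
  obtain ⟨p, hp⟩ := (M.tree.connected w z).exists_isPath
  cases p with
  | nil => exact hzw rfl
  | cons hadj p' =>
    exact hM _ _ hadj fun u hu => M.tree.isAcyclic.isPathConvex_of_connected_induce (M.sub_conn u)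
      _ hp hu (h hu) _ (by simp)

variable {M} in
lemma IsReduced.card_le (hM : M.IsReduced) (M' : TreeModel G) : Nat.card M.W ≤ Nat.card M'.W := by
  have := M'.finW
  choose φ hφ using fun w => M'.exists_forall_mem_sub_of_isClique
    (M.isClique_of_forall_mem_sub w fun _ => id)
  refine Nat.card_le_card_of_injective φ fun w w' hφw => ?_
  obtain ⟨z, hz⟩ := M.exists_forall_mem_sub_of_isClique (K := M.bag w ∪ M.bag w')
    (M'.isClique_of_forall_mem_sub (φ w) fun u hu => hu.elim (hφ w u) (hφw ▸ hφ w' u))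
  exact (hM.eq_of_bag_subset fun u hu => hz u (.inl hu)).symm.trans
    (hM.eq_of_bag_subset fun u hu => hz u (.inr hu))

end TreeModel

theorem stmt2_general {V : Type} (G : SimpleGraph V) (M : TreeModel G) :
    ∃ M' : TreeModel G,
      (∀ M'' : TreeModel G, Nat.card M'.W ≤ Nat.card M''.W) ∧
      numLeaves M'.T ≤ numLeaves M.T ∧
      (∀ u, numSubLeaves M'.T (M'.sub u) ≤ numSubLeaves M.T (M.sub u)) := by
  induction hn : Nat.card M.W using Nat.strong_induction_on generalizing M with
  | _ n ih =>
  by_cases hM : M.IsReduced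
  · exact ⟨M, hM.card_le, le_rfl, fun _ => le_rfl⟩
  obtain ⟨x, y, hxy, hbag⟩ : ∃ x y, M.T.Adj x y ∧ M.bag x ⊆ M.bag y := by
    simpa [TreeModel.IsReduced] using hM
  obtain ⟨M', hmin, hleaves, hsub⟩ :=
    ih _ (hn ▸ M.card_contract_lt hxy hbag) (M.contract hxy hbag) rfl
  exact ⟨M', hmin, hleaves.trans (M.numLeaves_contract_le hxy hbag),
    fun u => (hsub u).trans (M.numSubLeaves_contract_le hxy hbag u)⟩

/-- For every chordal graph `G` and every tree model `(T, {T_u})` of `G`, there exists a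
minimal tree model `(T', {T'_u})` of `G` (fewest host-tree nodes among all tree models)
with `|L(T')| ≤ |L(T)|` and `|L(T'_u)| ≤ |L(T_u)|` for every vertex `u`. -/
theorem stmt2 {V : Type} [Fintype V] (G : SimpleGraph V) (M : TreeModel G) :
    ∃ M' : TreeModel G,
      (∀ M'' : TreeModel G, Nat.card M'.W ≤ Nat.card M''.W) ∧
      numLeaves M'.T ≤ numLeaves M.T ∧
      (∀ u, numSubLeaves M'.T (M'.sub u) ≤ numSubLeaves M.T (M.sub u)) :=
  stmt2_general G M
end

section
/- Let G be a chordal graph and let T and T* be clique trees of G with Ee(T) = Ee(T*). For each vertex u of G, let T_u (respectively T*_u) be the subtree of T (respectively T*) induced by the maximal cliques containing u. Then |L(T_u)| = |L(T*_u)| for every vertex u of G. -/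
open SimpleGraph

/-!
Counting degrees in a tree with at least two nodes gives `#leaves = 2 + ∑ₓ (deg x - 2)⁺`, so the
number of leaves of `T_u` is determined by the nodes of `T_u` with at least three neighbours
in `T_u`, together with those neighbours. Such a node has degree at least three in `T`, so its
edges into `T_u` all lie in `Ee(T)`. Hence the count depends only on `Ee(T)` and on the node set
of `T_u`, which is the same for `T` and `T*`; `T_u` is a tree by the path condition of clique trees.
-/

namespace SimpleGraph

variable {W : Type*}

lemma deg_eq_degree (T : SimpleGraph W) (w : W) [Fintype (T.neighborSet w)] :
    deg T w = T.degree w := by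
  rw [deg, Set.ncard_eq_toFinset_card', Set.toFinset_card, card_neighborSet_eq_degree]

lemma deg_induce (T : SimpleGraph W) (s : Set W) (w : s) :
    deg (T.induce s) w = (T.neighborSet w ∩ s).ncard := by
  have himage : Subtype.val '' (T.induce s).neighborSet w = T.neighborSet w ∩ s := by
    ext v
    constructor
    · rintro ⟨v, hadj, rfl⟩
      exact ⟨hadj, v.2⟩
    · rintro ⟨hadj, hv⟩
      exact ⟨⟨v, hv⟩, hadj, rfl⟩
  rw [deg, ← himage, Set.ncard_image_of_injective _ Subtype.val_injective]

lemma numSubLeaves_eq_numLeaves_induce (T : SimpleGraph W) (s : Set W) :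
    numSubLeaves T s = numLeaves (T.induce s) := by
  have himage : Subtype.val '' leaves (T.induce s) = subLeaves T s := by
    ext w
    constructor
    · rintro ⟨w, hw, rfl⟩
      exact ⟨w.2, by rwa [leaves, Set.mem_ofPred_eq, deg_induce] at hw⟩
    · rintro ⟨hw, hleaf⟩
      exact ⟨⟨w, hw⟩, by rwa [leaves, Set.mem_ofPred_eq, deg_induce], rfl⟩
  rw [numSubLeaves, numLeaves, ← himage, Set.ncard_image_of_injective _ Subtype.val_injective]

lemma subLeaves_eq_empty_of_subsingleton (T : SimpleGraph W) {s : Set W} (hs : s.Subsingleton) :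
    subLeaves T s = ∅ := by
  refine Set.eq_empty_of_forall_notMem fun w ⟨hw, hleaf⟩ => ?_
  have hempty : T.neighborSet w ∩ s = ∅ :=
    Set.eq_empty_of_forall_notMem fun v ⟨hadj, hv⟩ => T.ne_of_adj hadj (hs hw hv)
  simp [hempty] at hleaf

/-- The subtraction is truncated: only nodes of degree at least three contribute to the sum. -/
lemma IsTree.numLeaves_eq_two_add_sum_deg_sub_two [Fintype W] [Nontrivial W]
    {T : SimpleGraph W} (hT : T.IsTree) : numLeaves T = 2 + ∑ w, (deg T w - 2) := by
  classical
  simp only [deg_eq_degree]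
  have hpos (w : W) : 0 < T.degree w := hT.connected.preconnected.degree_pos_of_nontrivial w
  have hsum : ∑ w, T.degree w + 2 = 2 * Fintype.card W := by
    rw [sum_degrees_eq_twice_card_edges, ← hT.card_edgeFinset]
    ring
  have hleaves : numLeaves T = ∑ w, if T.degree w = 1 then 1 else 0 := by
    rw [Finset.sum_boole, numLeaves, ← Set.ncard_coe_finset]
    congr 1
    ext w
    simp [leaves, deg_eq_degree]
  have hvertex : ∀ w, T.degree w + (if T.degree w = 1 then 1 else 0) = 2 + (T.degree w - 2) := by
    intro w
    have := hpos w
    split_ifs <;> omega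
  have htotal := Finset.sum_congr rfl fun w (_ : w ∈ Finset.univ) => hvertex w
  simp only [Finset.sum_add_distrib, Finset.sum_const, Finset.card_univ, smul_eq_mul] at htotal
  omega

lemma ncard_neighborSet_inter_sub_two_eq [Finite W] (T : SimpleGraph W) (w : W) (s : Set W) :
    (T.neighborSet w ∩ s).ncard - 2 = ({v | s(w, v) ∈ Ee T} ∩ s).ncard - 2 := by
  have hsub : {v | s(w, v) ∈ Ee T} ∩ s ⊆ T.neighborSet w ∩ s :=
    Set.inter_subset_inter_left _ fun v hv => hv.1
  by_cases h3 : 3 ≤ (T.neighborSet w ∩ s).ncard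
  · have hw : w ∈ Hh T := h3.trans (Set.ncard_le_ncard Set.inter_subset_left)
    have hsup : T.neighborSet w ∩ s ⊆ {v | s(w, v) ∈ Ee T} ∩ s :=
      fun v ⟨hadj, hv⟩ => ⟨⟨hadj, w, Sym2.mem_mk_left w v, hw⟩, hv⟩
    rw [hsub.antisymm hsup]
  · have := Set.ncard_le_ncard hsub
    omega

end SimpleGraph

lemma CliqueTree.isTree_induce_cliqueSub {V : Type*} {G : SimpleGraph V} (CT : CliqueTree G)
    {u : V} (hu : (cliqueSub G u).Nonempty) : (CT.T.induce (cliqueSub G u)).IsTree := by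
  have : Nonempty (cliqueSub G u) := hu.to_subtype
  refine ⟨⟨fun C C' => ?_⟩, CT.tree.isAcyclic.induce _⟩
  obtain ⟨p⟩ := CT.tree.connected.preconnected C.1 C'.1
  have hsupp : ∀ D ∈ p.toPath.1.support, D ∈ cliqueSub G u :=
    fun D hD => CT.path_cond _ _ _ p.toPath.2 D hD ⟨C.2, C'.2⟩
  exact ⟨p.toPath.1.induce _ hsupp⟩

/-- If `T` and `T*` are clique trees of a chordal graph `G` with `Ee(T) = Ee(T*)`, then
for every vertex `u`, the subtrees `T_u` and `T*_u` (induced by the maximal cliques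
containing `u`) have the same number of leaves. -/
theorem stmt13 {V : Type} [Fintype V] (G : SimpleGraph V) (CT CTstar : CliqueTree G)
    (hEe : Ee CT.T = Ee CTstar.T) :
    ∀ u : V, numSubLeaves CT.T (cliqueSub G u) = numSubLeaves CTstar.T (cliqueSub G u) := by
  intro u
  rcases (cliqueSub G u).subsingleton_or_nontrivial with hs | hs
  · simp only [numSubLeaves, subLeaves_eq_empty_of_subsingleton _ hs]
  have : Nontrivial (cliqueSub G u) := hs.coe_sort
  have : Fintype (cliqueSub G u) := Fintype.ofFinite _
  rw [numSubLeaves_eq_numLeaves_induce, numSubLeaves_eq_numLeaves_induce,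
    (CT.isTree_induce_cliqueSub hs.nonempty).numLeaves_eq_two_add_sum_deg_sub_two,
    (CTstar.isTree_induce_cliqueSub hs.nonempty).numLeaves_eq_two_add_sum_deg_sub_two]
  congr 1
  refine Finset.sum_congr rfl fun C _ => ?_
  rw [deg_induce, deg_induce, ncard_neighborSet_inter_sub_two_eq,
    ncard_neighborSet_inter_sub_two_eq, hEe]
end
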